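/- For every ordinal ξ > 0 there exist unique ordinals α and β such that β is either equal to 1 or additively decomposable (i.e., β = γ + δ for some γ, δ < β), and ξ = e^α(β). -/

import Mathlib

open Ordinal Set

noncomputable section

universe u

/-! ## Basic topological notions (explicit topologies) -/

/-- The derived set (set of limit points) of `A` w.r.t. the topology `t`. -/
def dSet {X : Type u} (t : TopologicalSpace X) (A : Set X) : Set X :=
  {x | ∀ U : Set X, t.IsOpen U → x ∈ U → ∃ y, y ∈ U ∩ A ∧ y ≠ x}

/-- Transfinite iterates of the derived-set operator, starting from the whole space. -/
def dIter {X : Type u} (t : TopologicalSpace X) (o : Ordinal.{u}) : Set X :=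
  Ordinal.limitRecOn o Set.univ (fun _ ih => dSet t ih)
    (fun o _ ih => ⋂ (o' : Ordinal.{u}) (h : o' < o), ih o' h)

/-- The Cantor–Bendixson rank of a point: the least `ξ` with `x ∉ d^{ξ+1} X`. -/
def ptRank {X : Type u} (t : TopologicalSpace X) (x : X) : Ordinal.{u} :=
  sInf {ξ : Ordinal.{u} | x ∉ dIter t (ξ + 1)}

/-- The rank of a space: `sup_{x ∈ X} (ρ(x) + 1)`. -/
def spRank (X : Type u) (t : TopologicalSpace X) : Ordinal.{u} :=
  ⨆ x : X, ptRank t x + 1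

/-- A space is scattered if every nonempty subset has an isolated point. -/
def IsScattered {X : Type u} (t : TopologicalSpace X) : Prop :=
  ∀ A : Set X, A.Nonempty → ∃ x ∈ A, ∃ U : Set X, t.IsOpen U ∧ U ∩ A = {x}

/-- A `d`-map: continuous, open and pointwise discrete. -/
def IsDMap {X : Type u} {Y : Type*} (t : TopologicalSpace X) (s : TopologicalSpace Y)
    (f : X → Y) : Prop :=
  @Continuous _ _ t s f ∧ @IsOpenMap _ _ t s f ∧
    ∀ y : Y, ∀ x : X, f x = y →
      ∃ U : Set X, t.IsOpen U ∧ x ∈ U ∧ ∀ z ∈ U, f z = y → z = x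

/-! ## Hyperexponentials and hyperlogarithms -/

/-- The exponential `e ξ = -1 + ω^ξ`. -/
def eFun (x : Ordinal.{u}) : Ordinal.{u} := ω ^ x - 1

/-- `E` is the family of hyperexponentials: a family of normal functions with `E 1 = e`,
`E (α+β) = E α ∘ E β`, pointwise minimal among all such families. -/
def IsHyperexpFamily (E : Ordinal.{u} → Ordinal.{u} → Ordinal.{u}) : Prop :=
  (∀ a, Order.IsNormal (E a)) ∧ E 1 = eFun ∧ (∀ a b, E (a + b) = E a ∘ E b) ∧
    ∀ F : Ordinal.{u} → Ordinal.{u} → Ordinal.{u},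
      (∀ a, Order.IsNormal (F a)) → F 1 = eFun → (∀ a b, F (a + b) = F a ∘ F b) →
        ∀ a b, E a b ≤ F a b

/-- The end logarithm: `ℓ 0 = 0` and `ℓ ξ` is the unique `β` with `ξ = α + ω^β`. -/
def ellFun (x : Ordinal.{u}) : Ordinal.{u} :=
  if x = 0 then 0 else sInf {b : Ordinal.{u} | ∃ a, x = a + ω ^ b}

/-- An initial function maps initial segments onto initial segments. -/
def IsInitialFun (f : Ordinal.{u} → Ordinal.{u}) : Prop :=
  ∀ o : Ordinal.{u}, ∃ o' : Ordinal.{u}, f '' Set.Iio o = Set.Iio o'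

/-- `L` is the family of hyperlogarithms: a family of initial functions with `L 1 = ℓ`,
`L (α+β) = L β ∘ L α`, pointwise maximal among all such families. -/
def IsHyperlogFamily (L : Ordinal.{u} → Ordinal.{u} → Ordinal.{u}) : Prop :=
  (∀ a, IsInitialFun (L a)) ∧ L 1 = ellFun ∧ (∀ a b, L (a + b) = L b ∘ L a) ∧
    ∀ M : Ordinal.{u} → Ordinal.{u} → Ordinal.{u},
      (∀ a, IsInitialFun (M a)) → M 1 = ellFun → (∀ a b, M (a + b) = M b ∘ M a) →
        ∀ a b, M a b ≤ L a b

/-! ## Icard topologies -/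

/-- The generalized Icard topology `τ_λ` based on a space `(X, t)`, relative to a family `L`
of hyperlogarithms: the least topology containing `t` and all sets
`(α, β]_ξ = {x | α < ℓ^ξ ρ_t(x) ≤ β}` (including `α = -1`, i.e. `[0, β]_ξ`), for `ξ < λ`. -/
def IcardTop {X : Type u} (L : Ordinal.{u} → Ordinal.{u} → Ordinal.{u})
    (t : TopologicalSpace X) (lam : Ordinal.{u}) : TopologicalSpace X :=
  t ⊓ TopologicalSpace.generateFrom
    {S : Set X | ∃ ξ < lam,
      (∃ b : Ordinal.{u}, S = {x | L ξ (ptRank t x) ≤ b}) ∨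
      (∃ a b : Ordinal.{u}, a < b ∧ S = {x | a < L ξ (ptRank t x) ∧ L ξ (ptRank t x) ≤ b})}

/-! ## Ordinal spaces -/

/-- The ordinal corresponding to a point of `Θ.ToType`. -/
def ordVal {Θ : Ordinal.{u}} (x : Θ.ToType) : Ordinal.{u} :=
  @Ordinal.typein Θ.ToType (· < ·) isWellOrder_lt x

/-- The left topology `I₀` on (the canonical type of order type) `Θ`, generated by the
intervals `[0, β]`. -/
def leftTop (Θ : Ordinal.{u}) : TopologicalSpace Θ.ToType :=
  TopologicalSpace.generateFrom {S : Set Θ.ToType | ∃ b : Θ.ToType, S = Set.Iic b}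

/-- The interval topology `I₁` on `Θ`, generated by the sets `[0, β]` and `(α, β]`. -/
def intervalTop (Θ : Ordinal.{u}) : TopologicalSpace Θ.ToType :=
  TopologicalSpace.generateFrom
    {S : Set Θ.ToType | (∃ b, S = Set.Iic b) ∨ ∃ a b : Θ.ToType, S = Set.Ioc a b}

/-- The Icard topology `I_λ = (I₀)_λ` on the ordinal `Θ`: the least topology containing the
left topology and all sets `{x < Θ | α < ℓ^ξ x ≤ β}` for `ξ < λ`. -/
def ordIcard (L : Ordinal.{u} → Ordinal.{u} → Ordinal.{u}) (Θ lam : Ordinal.{u}) :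
    TopologicalSpace Θ.ToType :=
  leftTop Θ ⊓ TopologicalSpace.generateFrom
    {S : Set Θ.ToType | ∃ ξ < lam,
      (∃ b : Ordinal.{u}, S = {x | L ξ (ordVal x) ≤ b}) ∨
      (∃ a b : Ordinal.{u}, a < b ∧ S = {x | a < L ξ (ordVal x) ∧ L ξ (ordVal x) ≤ b})}

/-! ## Modal logic: GL and topological (d-)semantics -/

/-- Formulas of the basic modal language. -/
inductive Fml : Type
  | bot : Fml
  | var : ℕ → Fml
  | imp : Fml → Fml → Fml
  | box : Fml → Fml

namespace Fml

/-- Negation. -/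
def neg (p : Fml) : Fml := p.imp .bot

/-- Diamond. -/
def dia (p : Fml) : Fml := (p.neg.box).neg

end Fml

/-- The valuation determined by an assignment `V` of sets to propositional variables, in the
`d`-semantics: `⟦◇φ⟧ = d⟦φ⟧`, i.e. `⟦◻φ⟧` is the complement of the derived set of the
complement of `⟦φ⟧`. -/
def fval {X : Type u} (t : TopologicalSpace X) (V : ℕ → Set X) : Fml → Set X
  | .bot => ∅
  | .var n => V n
  | .imp p q => (fval t V p)ᶜ ∪ fval t V q
  | .box p => (dSet t (fval t V p)ᶜ)ᶜ

/-- Classical tautologies (boxed formulas and variables treated as atoms). -/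
def Tautology (φ : Fml) : Prop :=
  ∀ v : Fml → Bool, v .bot = false → (∀ p q : Fml, v (p.imp q) = (!(v p) || v q)) →
    v φ = true

/-- Provability in the Gödel–Löb provability logic `GL`. -/
inductive GLProv : Fml → Prop
  | taut {φ : Fml} : Tautology φ → GLProv φ
  | axK (p q : Fml) : GLProv (((p.imp q).box).imp ((p.box).imp q.box))
  | axLob (p : Fml) : GLProv ((((p.box).imp p).box).imp p.box)
  | mp {p q : Fml} : GLProv (p.imp q) → GLProv p → GLProv q
  | nec {p : Fml} : GLProv p → GLProv p.box

/-- A set of formulas is GL-consistent if no finite conjunction of its members provably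
implies `⊥`. -/
def GLConsistent (Γ : Set Fml) : Prop :=
  ¬ ∃ l : List Fml, (∀ φ ∈ l, φ ∈ Γ) ∧ GLProv (l.foldr .imp .bot)

/-- `Γ` is satisfied in the space `(X, t)`. -/
def SatisfiedIn {X : Type u} (t : TopologicalSpace X) (Γ : Set Fml) : Prop :=
  ∃ (V : ℕ → Set X) (x : X), ∀ φ ∈ Γ, x ∈ fval t V φ

/-- `GL` is strongly complete with respect to `(X, t)`. -/
def StronglyCompleteFor {X : Type u} (t : TopologicalSpace X) : Prop :=
  ∀ Γ : Set Fml, GLConsistent Γ → SatisfiedIn t Γ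

/-- Validity of a formula in a space under the `d`-semantics. -/
def ValidIn {X : Type u} (t : TopologicalSpace X) (φ : Fml) : Prop :=
  ∀ V : ℕ → Set X, fval t V φ = Set.univ

/-! ## Trees and ω-bouquets -/

/-- The upset topology of a relation: opens are the `R`-upward closed sets. -/
def upTop {T : Type u} (R : T → T → Prop) : TopologicalSpace T where
  IsOpen U := ∀ x ∈ U, ∀ y, R x y → y ∈ U
  isOpen_univ := fun x _ y _ => trivial
  isOpen_inter := fun s t hs ht x hx y hR => ⟨hs x hx.1 y hR, ht x hx.2 y hR⟩
  isOpen_sUnion := fun S hS x hx y hR => by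
    obtain ⟨s, hsS, hxs⟩ := hx
    exact ⟨s, hsS, hS s hsS x hxs y hR⟩

/-- A countable, converse well-founded tree. -/
structure IsOmegaTree {T : Type u} (R : T → T → Prop) : Prop where
  countable : Countable T
  trans : ∀ a b c, R a b → R b c → R a c
  irrefl : ∀ a, ¬ R a a
  predWellOrdered : ∀ t : T, IsWellOrder {s : T // R s t} (fun a b => R a.1 b.1)
  root : ∃! r : T, ∀ s : T, ¬ R s r
  converseWellFounded : WellFounded (fun a b : T => R b a)

/-- The daughters (immediate successors) of a node. -/
def daughters {T : Type u} (R : T → T → Prop) (w : T) : Set T :=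
  {v | R w v ∧ ¬ ∃ u, R w u ∧ R u v}

/-- The bouquet topology `σ_R`: the least topology extending the upset topology such that
whenever `w` has limit rank, `(v_i)` enumerates the daughters of `w` without repetition and
`n < ω`, the set `{w} ∪ ⋃_{i > n} ({v_i} ∪ R(v_i))` is open. -/
def sigmaTop {T : Type u} (R : T → T → Prop) : TopologicalSpace T :=
  upTop R ⊓ TopologicalSpace.generateFrom
    {S : Set T | ∃ w : T, Order.IsSuccLimit (ptRank (upTop R) w) ∧
      ∃ v : ℕ → T, Function.Injective v ∧ Set.range v = daughters R w ∧
        ∃ n : ℕ, S = {w} ∪ ⋃ (i : ℕ) (_ : n < i), ({v i} ∪ {u | R (v i) u})}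

/-! ## The club topology (via its neighborhood characterization) -/

/-- `C` is a club in (i.e. a closed unbounded subset of) the point `x`. -/
def IsClubIn {Θ : Ordinal.{u}} (C : Set Θ.ToType) (x : Θ.ToType) : Prop :=
  (∀ y ∈ C, y < x) ∧ (∀ z, z < x → ∃ y ∈ C, z < y) ∧
    ∀ z, z < x → (∃ w, w < z) → (∀ w, w < z → ∃ y ∈ C, w < y ∧ y < z) → z ∈ C

/-- `t` is the club topology on `Θ`: a set `U` is a neighborhood of a point `x ∈ U` iff
`U` contains a club in `x` or `cf(x) < ℵ₁`. -/
def IsClubTop (Θ : Ordinal.{u}) (t : TopologicalSpace Θ.ToType) : Prop :=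
  ∀ (U : Set Θ.ToType) (x : Θ.ToType), x ∈ U →
    (U ∈ @nhds _ t x ↔
      (Ordinal.cof (ordVal x) < Cardinal.aleph 1 ∨ ∃ C ⊆ U, IsClubIn C x))


/-!
Uniqueness: if `E a b = E a' b'` with `a < a'`, then `b = E (a' - a) b'` is a value of `e`,
hence an additively principal ordinal greater than `1`, so `b` is neither `1` nor decomposable.

Existence, by induction on `ξ`: an ordinal that is neither `1` nor decomposable is some
`ω ^ l`; if `l < ξ`, then `ξ = e l` and the induction hypothesis applies to `l`. What remains
is an epsilon number `ξ = ω ^ ξ`, which we show to be `E a b` for some `0 < b < ξ`. If it is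
not, let `μ = ω ^ m` be the least level sending some point below `ξ` to `ξ` or beyond. All
lower levels fix `ξ`, and `E μ` jumps over `ξ` between some `γ` and `γ + 1`. Inserting the
value `ξ` into `E μ` at `γ + 1` gives a normal function `g`, and replacing level `μ` of `E` by
`g` gives another family with the defining properties of `E` that lies below `E` at
`(μ, γ + 1)`, contradicting minimality.
-/

open Order

theorem Ordinal.exists_lt_add_eq_iff_not_isPrincipal {b : Ordinal.{u}} :
    (∃ γ < b, ∃ δ < b, b = γ + δ) ↔ ¬ IsPrincipal (· + ·) b := by
  simp [isPrincipal_add_iff_add_lt_ne_self, eq_comm]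

theorem eFun_of_ne_zero {y : Ordinal.{u}} (hy : y ≠ 0) : eFun y = ω ^ y := by
  have h1 : (1 : Ordinal.{u}) < ω ^ y := one_lt_opow.2 ⟨one_lt_omega0, hy⟩
  rw [eFun]
  conv_lhs => rw [← add_omega0_opow h1]
  exact Ordinal.add_sub_cancel 1 _

theorem isPrincipal_eFun (y : Ordinal.{u}) : IsPrincipal (· + ·) (eFun y) := by
  rcases eq_or_ne y 0 with rfl | hy
  · simp [eFun, isPrincipal_zero]
  · rw [eFun_of_ne_zero hy]
    exact isPrincipal_add_omega0_opow y

theorem Order.IsNormal.update_zero {f : Ordinal.{u} → Ordinal.{u}} (hf : IsNormal f)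
    {v : Ordinal.{u}} (hv : v < f 1) : IsNormal (Function.update f 0 v) := by
  refine isNormal_iff.2 ⟨fun x y hxy => ?_, fun o ho c hc => ?_⟩
  · have hy : y ≠ 0 := hxy.ne_bot
    rcases eq_or_ne x 0 with rfl | hx
    · simpa [hy] using hv.trans_le (hf.monotone (one_le_iff_ne_zero.2 hy))
    · simpa [hx, hy] using hf.strictMono hxy
  · rw [Function.update_of_ne (show o ≠ 0 from ho.ne_bot)]
    refine (hf.le_iff_forall_le ho).2 fun b hb => ?_
    rcases eq_or_ne b 0 with rfl | hb0
    · have h1 := hc 1 (one_lt_of_isSuccLimit ho)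
      rw [Function.update_of_ne one_ne_zero] at h1
      exact (hf.strictMono zero_lt_one).le.trans h1
    · simpa [hb0] using hc b hb

theorem Order.IsNormal.ite_le_sub {f h : Ordinal.{u} → Ordinal.{u}} (hf : IsNormal f)
    (hh : IsNormal h) {γ : Ordinal.{u}} (hγ : f γ < h 0) :
    IsNormal fun x => if x ≤ γ then f x else h (x - (γ + 1)) := by
  refine isNormal_iff.2 ⟨fun x y hxy => ?_, fun o ho c hc => ?_⟩
  · rcases le_or_gt y γ with hy | hy
    · simpa [hxy.le.trans hy, hy] using hf.strictMono hxy
    rcases le_or_gt x γ with hx | hx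
    · simpa [hx, hy.not_ge] using (hf.monotone hx).trans_lt (hγ.trans_le (hh.monotone zero_le))
    · simp only [hx.not_ge, hy.not_ge, if_false]
      refine hh.strictMono ?_
      rw [lt_sub, Ordinal.add_sub_cancel_of_le (add_one_le_iff.2 hx)]
      exact hxy
  · rcases le_or_gt o γ with hoγ | hoγ
    · simp only [hoγ, if_true]
      exact (hf.le_iff_forall_le ho).2 fun b hb => by simpa [(hb.trans_le hoγ).le] using hc b hb
    simp only [hoγ.not_ge, if_false]
    have hlt : γ + 1 < o := ho.succ_lt hoγ
    refine (hh.le_iff_forall_le (isSuccLimit_sub ho.isSuccPrelimit hlt)).2 fun y hy => ?_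
    rw [lt_sub] at hy
    have hγy : ¬ γ + 1 + y ≤ γ := not_le.2 ((lt_add_one γ).trans_le le_self_add)
    simpa [hγy] using hc _ hy

theorem Order.IsNormal.iterate {α : Type*} [LinearOrder α] {f : α → α} (hf : IsNormal f) :
    ∀ n : ℕ, IsNormal f^[n]
  | 0 => .id
  | n + 1 => by
    rw [Function.iterate_succ']
    exact hf.comp (hf.iterate n)

theorem Ordinal.omega0_opow_mul_add_lt {m r : Ordinal.{u}} (k : ℕ) (hr : r < ω ^ m) :
    ω ^ m * k + r < ω ^ (m + 1) := by
  rw [← succ_eq_add_one, lt_omega0_opow_succ]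
  refine ⟨k + 1, ?_⟩
  rw [Nat.cast_add_one, mul_add_one]
  exact add_lt_add_right hr _

theorem Ordinal.exists_eq_omega0_opow_mul_add (m a : Ordinal.{u}) :
    ∃ (q : Ordinal.{u}) (k : ℕ) (r : Ordinal.{u}), r < ω ^ m ∧
      a = ω ^ (m + 1) * q + (ω ^ m * k + r) := by
  have hk : a % ω ^ (m + 1) / ω ^ m < ω := by
    rw [← Ordinal.lt_mul_iff_div_lt (opow_ne_zero m omega0_ne_zero), ← opow_add_one]
    exact Ordinal.mod_lt a (opow_ne_zero _ omega0_ne_zero)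
  obtain ⟨k, hk⟩ := Ordinal.lt_omega0.1 hk
  refine ⟨a / ω ^ (m + 1), k, a % ω ^ (m + 1) % ω ^ m,
    Ordinal.mod_lt _ (opow_ne_zero m omega0_ne_zero), ?_⟩
  rw [← hk, Ordinal.div_add_mod, Ordinal.div_add_mod]

/-- `splice f γ v` inserts the value `v` into the sequence of values of `f` right after
position `γ`. -/
def splice (f : Ordinal.{u} → Ordinal.{u}) (γ v : Ordinal.{u}) : Ordinal.{u} → Ordinal.{u} :=
  fun x => if x ≤ γ then f x else Function.update (fun y => f (γ + y)) 0 v (x - (γ + 1))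

section splice

variable {f : Ordinal.{u} → Ordinal.{u}} {γ v : Ordinal.{u}}

theorem isNormal_splice (hf : IsNormal f) (hγ : f γ < v) (hv : v < f (γ + 1)) :
    IsNormal (splice f γ v) :=
  hf.ite_le_sub ((hf.comp (Ordinal.isNormal_add_right γ)).update_zero hv) (by simpa using hγ)

theorem splice_add_one : splice f γ v (γ + 1) = v := by
  simp [splice]

theorem splice_eq_or_mem_range (x : Ordinal.{u}) :
    splice f γ v x = v ∨ splice f γ v x ∈ Set.range f := by
  unfold splice
  split_ifs
  · exact Or.inr ⟨x, rfl⟩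
  rcases eq_or_ne (x - (γ + 1)) 0 with h | h
  · simp [h]
  · simp [Function.update_of_ne h]

theorem splice_eq_self (hf : IsNormal f) (hγ : f γ < v) (hv : v < f (γ + 1))
    {z : Ordinal.{u}} (hz : IsPrincipal (· + ·) z) (hfz : f z = z) : splice f γ v z = z := by
  unfold splice
  split_ifs with hzγ
  · exact hfz
  have hz1 : γ + 1 < z := by
    refine (add_one_le_iff.2 (not_le.1 hzγ)).lt_of_ne fun h => ?_
    rw [← h] at hfz
    exact (hf.strictMono.le_apply.trans_lt hγ).not_ge (le_of_lt_add_one (hfz ▸ hv))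
  have hsub : z - (γ + 1) = z := Ordinal.sub_eq_of_add_eq (hz.add_eq_right hz1)
  rw [hsub, Function.update_of_ne (show z ≠ 0 from hz1.ne_bot),
    hz.add_eq_right ((lt_add_one γ).trans hz1), hfz]

end splice

structure IsHyperation (E : Ordinal.{u} → Ordinal.{u} → Ordinal.{u}) : Prop where
  isNormal : ∀ a, IsNormal (E a)
  add_eq_comp : ∀ a b, E (a + b) = E a ∘ E b

namespace IsHyperation

variable {E : Ordinal.{u} → Ordinal.{u} → Ordinal.{u}}

theorem add_apply (hE : IsHyperation E) (a b x : Ordinal.{u}) : E (a + b) x = E a (E b x) :=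
  congrFun (hE.add_eq_comp a b) x

theorem apply_apply_of_add_eq (hE : IsHyperation E) {a b : Ordinal.{u}} (h : a + b = b)
    (x : Ordinal.{u}) : E a (E b x) = E b x := by
  rw [← hE.add_apply, h]

theorem zero_apply (hE : IsHyperation E) (x : Ordinal.{u}) : E 0 x = x :=
  (hE.isNormal 0).strictMono.injective (hE.apply_apply_of_add_eq (zero_add 0) x)

theorem le_apply (hE : IsHyperation E) (a x : Ordinal.{u}) : x ≤ E a x :=
  (hE.isNormal a).strictMono.le_apply

theorem apply_le_apply_of_le (hE : IsHyperation E) {a a' : Ordinal.{u}} (h : a ≤ a')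
    (x : Ordinal.{u}) : E a x ≤ E a' x :=
  calc E a x ≤ E a (E (a' - a) x) := (hE.isNormal a).monotone (hE.le_apply _ _)
    _ = E a' x := by rw [← hE.add_apply, Ordinal.add_sub_cancel_of_le h]

theorem isPrincipal_of_forall_apply_lt (hE : IsHyperation E) {μ ξ x₀ : Ordinal.{u}}
    (hx₀ : x₀ < ξ) (hμ : ξ ≤ E μ x₀) (hbelow : ∀ a < μ, ∀ x < ξ, E a x < ξ) :
    IsPrincipal (· + ·) μ := fun u v hu hv => by
  by_contra! h
  exact (hbelow u hu _ (hbelow v hv x₀ hx₀)).not_ge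
    (hμ.trans (by simpa only [hE.add_apply] using hE.apply_le_apply_of_le h x₀))

end IsHyperation

/-- The family `E` with level `ω ^ m` replaced by `g`: for `a = ω ^ (m + 1) * q + ω ^ m * k + r`
with `k < ω` and `r < ω ^ m`, its level `a` is `E (ω ^ (m + 1) * q) ∘ g^[k] ∘ E r`. -/
def replaceLevel (E : Ordinal.{u} → Ordinal.{u} → Ordinal.{u}) (m : Ordinal.{u})
    (g : Ordinal.{u} → Ordinal.{u}) (a : Ordinal.{u}) : Ordinal.{u} → Ordinal.{u} :=
  E (ω ^ (m + 1) * (a / ω ^ (m + 1))) ∘ g^[(a % ω ^ (m + 1) / ω ^ m).card.toNat] ∘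
    E (a % ω ^ m)

section replaceLevel

variable {E : Ordinal.{u} → Ordinal.{u} → Ordinal.{u}} {m : Ordinal.{u}}
  {g : Ordinal.{u} → Ordinal.{u}}

theorem replaceLevel_eq (q : Ordinal.{u}) (k : ℕ) {r : Ordinal.{u}} (hr : r < ω ^ m) :
    replaceLevel E m g (ω ^ (m + 1) * q + (ω ^ m * k + r)) =
      E (ω ^ (m + 1) * q) ∘ g^[k] ∘ E r := by
  have hs := omega0_opow_mul_add_lt k hr
  have hmod : (ω ^ (m + 1) * q + (ω ^ m * k + r)) % ω ^ m = r := by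
    rw [opow_add_one, mul_assoc, ← add_assoc, ← mul_add, Ordinal.mul_add_mod_self,
      Ordinal.mod_eq_of_lt hr]
  simp only [replaceLevel, hmod, Ordinal.mul_add_div _ (opow_ne_zero _ omega0_ne_zero),
    Ordinal.div_eq_zero_of_lt hs, add_zero, Ordinal.mul_add_mod_self, Ordinal.mod_eq_of_lt hs,
    Ordinal.div_eq_zero_of_lt hr, Ordinal.card_nat, Cardinal.toNat_natCast]

theorem replaceLevel_of_lt (hE : IsHyperation E) {r : Ordinal.{u}} (hr : r < ω ^ m) :
    replaceLevel E m g r = E r := by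
  have := replaceLevel_eq (E := E) (g := g) 0 0 hr
  simp only [mul_zero, Nat.cast_zero, zero_add, Function.iterate_zero] at this
  rw [this]
  funext x
  exact hE.zero_apply _

theorem replaceLevel_omega0_opow (hE : IsHyperation E) : replaceLevel E m g (ω ^ m) = g := by
  have := replaceLevel_eq (E := E) (g := g) 0 1 (opow_pos m omega0_pos)
  simp only [mul_zero, Nat.cast_one, mul_one, add_zero, zero_add, Function.iterate_one] at this
  rw [this]
  funext x
  simp [hE.zero_apply]

theorem IsHyperation.replaceLevel (hE : IsHyperation E) (hg : IsNormal g)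
    (hgE : ∀ r < ω ^ m, ∀ x, E r (g x) = g x)
    (hEg : ∀ c, ω ^ (m + 1) ≤ c → ∀ x, g (E c x) = E c x) :
    IsHyperation (replaceLevel E m g) := by
  refine ⟨fun a => ?_, fun a b => ?_⟩
  · obtain ⟨q, k, r, hr, rfl⟩ := exists_eq_omega0_opow_mul_add m a
    rw [replaceLevel_eq q k hr]
    exact (hE.isNormal _).comp ((hg.iterate k).comp (hE.isNormal r))
  obtain ⟨q, k, r, hr, rfl⟩ := exists_eq_omega0_opow_mul_add m a
  obtain ⟨q', k', r', hr', rfl⟩ := exists_eq_omega0_opow_mul_add m b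
  rw [replaceLevel_eq q k hr, replaceLevel_eq q' k' hr']
  funext x
  rcases eq_or_ne q' 0 with rfl | hq'
  · rcases eq_or_ne k' 0 with rfl | hk'
    · have hsum :
          ω ^ (m + 1) * q + (ω ^ m * k + r) + (ω ^ (m + 1) * 0 + (ω ^ m * (0 : ℕ) + r')) =
            ω ^ (m + 1) * q + (ω ^ m * k + (r + r')) := by
        simp only [mul_zero, Nat.cast_zero, zero_add, add_assoc]
      rw [hsum, replaceLevel_eq q k (isPrincipal_add_omega0_opow m hr hr')]
      simp [hE.zero_apply, hE.add_apply]
    · have hsum : ω ^ (m + 1) * q + (ω ^ m * k + r) + (ω ^ (m + 1) * 0 + (ω ^ m * k' + r'))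
          = ω ^ (m + 1) * q + (ω ^ m * (k + k' : ℕ) + r') := by
        have hμk' : ω ^ m ≤ ω ^ m * k' := le_mul_left _ (by exact_mod_cast hk'.bot_lt)
        rw [mul_zero, zero_add, add_assoc, add_assoc (ω ^ m * k), ← add_assoc r,
          (isPrincipal_add_omega0_opow m).add_eq_right_of_le hr hμk']
        simp only [Nat.cast_add, mul_add, add_assoc]
      rw [hsum, replaceLevel_eq q (k + k') hr']
      obtain ⟨n, rfl⟩ := Nat.exists_eq_succ_of_ne_zero hk'
      simp only [Function.comp_apply, Function.iterate_add_apply, mul_zero, hE.zero_apply]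
      rw [Function.iterate_succ_apply', hgE r hr]
  · have hνq' : ω ^ (m + 1) ≤ ω ^ (m + 1) * q' := le_mul_left _ (pos_iff_ne_zero.2 hq')
    have hs := omega0_opow_mul_add_lt k hr
    have hν := isPrincipal_add_omega0_opow (m + 1)
    have hsum : ω ^ (m + 1) * q + (ω ^ m * k + r) + (ω ^ (m + 1) * q' + (ω ^ m * k' + r'))
        = ω ^ (m + 1) * (q + q') + (ω ^ m * k' + r') := by
      rw [add_assoc, ← add_assoc (ω ^ m * k + r), hν.add_eq_right_of_le hs hνq', ← add_assoc,
        ← mul_add]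
    rw [hsum, replaceLevel_eq (q + q') k' hr']
    simp only [Function.comp_apply]
    rw [hE.apply_apply_of_add_eq (hν.add_eq_right_of_le (le_add_self.trans_lt hs) hνq'),
      Function.iterate_fixed (hEg _ hνq' _), mul_add, hE.add_apply]

end replaceLevel

namespace IsHyperexpFamily

variable {E : Ordinal.{u} → Ordinal.{u} → Ordinal.{u}}

theorem isHyperation (hE : IsHyperexpFamily E) : IsHyperation E :=
  ⟨hE.1, hE.2.2.1⟩

theorem le_of_isHyperation (hE : IsHyperexpFamily E)
    {F : Ordinal.{u} → Ordinal.{u} → Ordinal.{u}} (hF : IsHyperation F) (hF1 : F 1 = eFun)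
    (a x : Ordinal.{u}) : E a x ≤ F a x :=
  hE.2.2.2 F hF.isNormal hF1 hF.add_eq_comp a x

theorem one_apply (hE : IsHyperexpFamily E) (x : Ordinal.{u}) : E 1 x = eFun x :=
  congrFun hE.2.1 x

theorem apply_zero (hE : IsHyperexpFamily E) (a : Ordinal.{u}) : E a 0 = 0 := by
  have hF : IsHyperation fun a => Function.update (E a) 0 0 := by
    refine ⟨fun a => (hE.1 a).update_zero ?_, fun a b => funext fun x => ?_⟩
    · exact zero_lt_one.trans_le (hE.isHyperation.le_apply a 1)
    rcases eq_or_ne x 0 with rfl | hx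
    · simp
    · have hbx : E b x ≠ 0 := (hx.bot_lt.trans_le (hE.isHyperation.le_apply b x)).ne'
      simp [hx, hbx, hE.isHyperation.add_apply]
  have hF1 : (fun a => Function.update (E a) 0 0) 1 = eFun := by
    funext x
    rcases eq_or_ne x 0 with rfl | hx
    · simp [eFun]
    · simp [hx, hE.one_apply]
  simpa using hE.le_of_isHyperation hF hF1 a 0

theorem apply_eq_eFun (hE : IsHyperexpFamily E) {c : Ordinal.{u}} (hc : c ≠ 0)
    (x : Ordinal.{u}) : E c x = eFun (E (c - 1) x) := by
  rw [← hE.one_apply, ← hE.isHyperation.add_apply,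
    Ordinal.add_sub_cancel_of_le (one_le_iff_ne_zero.2 hc)]

theorem isPrincipal_apply (hE : IsHyperexpFamily E) {c : Ordinal.{u}} (hc : c ≠ 0)
    (x : Ordinal.{u}) : IsPrincipal (· + ·) (E c x) := by
  rw [hE.apply_eq_eFun hc]
  exact isPrincipal_eFun _

theorem one_lt_apply (hE : IsHyperexpFamily E) {c x : Ordinal.{u}} (hc : c ≠ 0) (hx : x ≠ 0) :
    1 < E c x := by
  have hy : E (c - 1) x ≠ 0 := (hx.bot_lt.trans_le (hE.isHyperation.le_apply _ x)).ne'
  rw [hE.apply_eq_eFun hc, eFun_of_ne_zero hy]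
  exact one_lt_opow.2 ⟨one_lt_omega0, hy⟩

theorem le_apply_one (hE : IsHyperexpFamily E) (a : Ordinal.{u}) : a ≤ E a 1 := by
  refine StrictMono.le_apply (f := fun a => E a 1) fun a a' h => ?_
  calc E a 1 < E a (E (a' - a) 1) :=
        (hE.1 a).strictMono (hE.one_lt_apply (Ordinal.sub_ne_zero_iff_lt.2 h) one_ne_zero)
    _ = E a' 1 := by rw [← hE.isHyperation.add_apply, Ordinal.add_sub_cancel_of_le h.le]

theorem apply_omega0_opow_le {m : Ordinal.{u}} {g : Ordinal.{u} → Ordinal.{u}}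
    (hE : IsHyperexpFamily E) (hm : m ≠ 0) (hg : IsNormal g)
    (hgE : ∀ r < ω ^ m, ∀ x, E r (g x) = g x)
    (hEg : ∀ c, ω ^ (m + 1) ≤ c → ∀ x, g (E c x) = E c x) (x : Ordinal.{u}) :
    E (ω ^ m) x ≤ g x := by
  have hF1 : replaceLevel E m g 1 = eFun := by
    rw [replaceLevel_of_lt hE.isHyperation (one_lt_opow.2 ⟨one_lt_omega0, hm⟩), hE.2.1]
  simpa [replaceLevel_omega0_opow hE.isHyperation] using
    hE.le_of_isHyperation (hE.isHyperation.replaceLevel hg hgE hEg) hF1 (ω ^ m) x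

theorem apply_add_one_le {m ξ γ : Ordinal.{u}} (hE : IsHyperexpFamily E) (hm : m ≠ 0)
    (hfix : ∀ r < ω ^ m, E r ξ = ξ) (hγ : E (ω ^ m) γ < ξ) :
    E (ω ^ m) (γ + 1) ≤ ξ := by
  by_contra! hξ
  have hf := hE.1 (ω ^ m)
  refine (hE.apply_omega0_opow_le hm (isNormal_splice hf hγ hξ) (fun r hr x => ?_)
    (fun c hc x => ?_) (γ + 1)).not_gt (by rwa [splice_add_one])
  · rcases splice_eq_or_mem_range (f := E (ω ^ m)) (γ := γ) (v := ξ) x with h | ⟨y, h⟩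
    · rw [h, hfix r hr]
    · rw [← h, hE.isHyperation.apply_apply_of_add_eq
        ((isPrincipal_add_omega0_opow m).add_eq_right hr)]
  · have hμc : ω ^ m + c = c := add_of_omega0_opow_le
      ((opow_lt_opow_iff_right one_lt_omega0).2 (lt_add_one m)) hc
    have hc0 : c ≠ 0 := ((opow_pos _ omega0_pos).trans_le hc).ne'
    exact splice_eq_self hf hγ hξ (hE.isPrincipal_apply hc0 x)
      (hE.isHyperation.apply_apply_of_add_eq hμc x)

theorem exists_apply_eq_of_omega0_opow_eq_self (hE : IsHyperexpFamily E) {ξ : Ordinal.{u}}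
    (hξ : ω ^ ξ = ξ) : ∃ a b, b ≠ 0 ∧ b < ξ ∧ E a b = ξ := by
  by_contra! H
  have hξ0 : ξ ≠ 0 := by
    rintro rfl
    simp at hξ
  have hξ1 : 1 < ξ := hξ ▸ one_lt_opow.2 ⟨one_lt_omega0, hξ0⟩
  have hlim : IsSuccLimit ξ := isSuccLimit_of_isPrincipal_add hξ1 <| by
    rw [← hξ]
    exact isPrincipal_add_omega0_opow ξ
  obtain ⟨μ, ⟨x₀, hx₀, hμx₀⟩, hμmin⟩ := wellFounded_lt.has_min
    {a | ∃ x < ξ, ξ ≤ E a x} ⟨ξ, 1, hξ1, hE.le_apply_one ξ⟩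
  have hbelow : ∀ a < μ, ∀ x < ξ, E a x < ξ :=
    fun a ha x hx => not_le.1 fun h => hμmin a ⟨x, hx, h⟩ ha
  obtain rfl | ⟨m, hm⟩ := isPrincipal_add_iff_zero_or_omega0_opow.1
    (hE.isHyperation.isPrincipal_of_forall_apply_lt hx₀ hμx₀ hbelow)
  · exact hμx₀.not_gt (by rwa [hE.isHyperation.zero_apply])
  dsimp only at hm
  subst hm
  have hm : m ≠ 0 := by
    rintro rfl
    refine hμx₀.not_gt ?_
    rw [opow_zero, hE.one_apply]
    calc eFun x₀ ≤ ω ^ x₀ := Ordinal.sub_le_self _ _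
      _ < ξ := hξ ▸ (opow_lt_opow_iff_right one_lt_omega0).2 hx₀
  have hfix : ∀ r < ω ^ m, E r ξ = ξ := fun r hr =>
    le_antisymm (((hE.1 r).le_iff_forall_le hlim).2 fun b hb => (hbelow r hr b hb).le)
      (hE.isHyperation.le_apply r ξ)
  obtain ⟨γ, hγ, hγ'⟩ := (hE.1 (ω ^ m)).exists_map_le_lt_map_succ (x := ξ)
    (by simp [hE.apply_zero])
  have hγξ : E (ω ^ m) γ < ξ := by
    refine hγ.lt_of_ne fun h => H _ γ ?_ ?_ h
    · rintro rfl
      exact hξ0 (h ▸ hE.apply_zero _)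
    · exact ((hE.1 _).strictMono.le_iff_le.1 (h ▸ hμx₀)).trans_lt hx₀
  exact (hE.apply_add_one_le hm hfix hγξ).not_gt (by rwa [← succ_eq_add_one])

theorem exists_apply_eq (hE : IsHyperexpFamily E) {ξ : Ordinal.{u}} (hξ : ξ ≠ 0) :
    ∃ a b, (b = 1 ∨ ¬ IsPrincipal (· + ·) b) ∧ E a b = ξ := by
  induction ξ using WellFoundedLT.induction with
  | _ ξ IH =>
  by_cases hadm : ξ = 1 ∨ ¬ IsPrincipal (· + ·) ξ
  · exact ⟨0, ξ, hadm, hE.isHyperation.zero_apply ξ⟩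
  push Not at hadm
  obtain ⟨l, hl⟩ := (isPrincipal_add_iff_zero_or_omega0_opow.1 hadm.2).resolve_left hξ
  dsimp only at hl
  subst hl
  have hl : l ≠ 0 := by
    rintro rfl
    exact hadm.1 (opow_zero ω)
  rcases (right_le_opow l one_lt_omega0).lt_or_eq with hlt | heq
  · obtain ⟨a, b, hb, rfl⟩ := IH _ hlt hl
    exact ⟨1 + a, b, hb, by rw [hE.isHyperation.add_apply, hE.one_apply, eFun_of_ne_zero hl]⟩
  · obtain ⟨a, b, hb0, hbξ, hab⟩ := hE.exists_apply_eq_of_omega0_opow_eq_self heq.symm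
    obtain ⟨a', b', hb', rfl⟩ := IH b (hbξ.trans_eq heq) hb0
    exact ⟨a + a', b', hb', by rw [hE.isHyperation.add_apply, hab, ← heq]⟩

theorem eq_of_apply_eq (hE : IsHyperexpFamily E) {a a' b b' : Ordinal.{u}}
    (hb : b = 1 ∨ ¬ IsPrincipal (· + ·) b) (hb' : b' = 1 ∨ ¬ IsPrincipal (· + ·) b')
    (ha : a ≤ a') (h : E a b = E a' b') : a = a' ∧ b = b' := by
  have hb'0 : b' ≠ 0 := by
    rintro rfl
    simp [isPrincipal_zero] at hb'
  have hbb : b = E (a' - a) b' := (hE.1 a).strictMono.injective <| by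
    rw [← hE.isHyperation.add_apply, Ordinal.add_sub_cancel_of_le ha, h]
  rcases eq_or_ne (a' - a) 0 with hd | hd
  · exact ⟨ha.antisymm (Ordinal.sub_eq_zero_iff_le.1 hd),
      by rw [hbb, hd, hE.isHyperation.zero_apply]⟩
  · rw [hbb] at hb
    exact (hb.elim (hE.one_lt_apply hd hb'0).ne' (· (hE.isPrincipal_apply hd b'))).elim

end IsHyperexpFamily

/-- (Hyperexponential normal form.) For every ordinal `ξ > 0` there are
unique `α, β` with `β` equal to `1` or additively decomposable, and `ξ = e^α(β)`. -/
theorem hyperexp_normal_form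
    (E : Ordinal.{u} → Ordinal.{u} → Ordinal.{u}) (hE : IsHyperexpFamily E)
    (ξ : Ordinal.{u}) (hξ : ξ ≠ 0) :
    ∃! p : Ordinal.{u} × Ordinal.{u},
      (p.2 = 1 ∨ ∃ γ < p.2, ∃ δ < p.2, p.2 = γ + δ) ∧ ξ = E p.1 p.2 := by
  simp only [Ordinal.exists_lt_add_eq_iff_not_isPrincipal]
  obtain ⟨a, b, hb, hab⟩ := hE.exists_apply_eq hξ
  refine ⟨(a, b), ⟨hb, hab.symm⟩, fun ⟨a', b'⟩ ⟨hb', hab'⟩ => ?_⟩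
  have h : E a' b' = E a b := hab'.symm.trans hab.symm
  rcases le_total a' a with ha | ha
  · obtain ⟨rfl, rfl⟩ := hE.eq_of_apply_eq hb' hb ha h
    rfl
  · obtain ⟨rfl, rfl⟩ := hE.eq_of_apply_eq hb hb' ha h.symm
    rfl

end
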